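/- Let ρ > 0 and R > 0, and let C₁ be the algebra constant of H^{ρ,1}. For any real-valued u, v ∈ H₀^{ρ,1} with ‖u‖_{ρ,1} ≤ R and ‖v‖_{ρ,1} ≤ R, and any κ > 100 C₁ R, the gauge map is locally Lipschitz: ‖m(κ,u) − m(κ,v)‖_{ρ,1} ≤ ( 1/(κ − C₁R) + C₁R/(κ − C₁R)² ) ‖u − v‖_{ρ,1}. -/
import Mathlib


/-!
Common framework: we model periodic functions on the torus 𝕋 = ℝ/2πℤ by their
sequences of Fourier coefficients `u : ℤ → ℂ`.  Products of functions become
convolutions of coefficients, the analytic Sobolev norm is an exponentially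
weighted ℓ²-sum, and the Hardy space L²₊ is modelled as `lp`-space over the
positive integer frequencies.
-/

noncomputable section
open Filter Set
open scoped BigOperators Topology

namespace BO

/-- Japanese bracket `⟨n⟩ = (1+n²)^{1/2}`. -/
def jb (n : ℤ) : ℝ := Real.sqrt (1 + (n : ℝ) ^ 2)

/-- The weight `⟨n⟩^s e^{ρ|n|}` of the analytic Sobolev space `H^{ρ,s}`. -/
def wt (ρ s : ℝ) (n : ℤ) : ℝ := jb n ^ s * Real.exp (ρ * |(n : ℝ)|)

/-- Membership in `H^{ρ,s}` (for the Fourier coefficients `u`). -/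
def MemH (ρ s : ℝ) (u : ℤ → ℂ) : Prop :=
  Summable fun n : ℤ => wt ρ s n ^ 2 * ‖u n‖ ^ 2

/-- The analytic Sobolev norm `‖u‖_{ρ,s}`. -/
def anorm (ρ s : ℝ) (u : ℤ → ℂ) : ℝ :=
  Real.sqrt (∑' n : ℤ, wt ρ s n ^ 2 * ‖u n‖ ^ 2)

/-- The (normalized) `L²` norm. -/
def l2norm (u : ℤ → ℂ) : ℝ := Real.sqrt (∑' n : ℤ, ‖u n‖ ^ 2)

/-- `u` is the coefficient sequence of a real-valued function. -/
def IsReal (u : ℤ → ℂ) : Prop := ∀ n : ℤ, u (-n) = (starRingEnd ℂ) (u n)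

/-- Fourier coefficients of the pointwise product (= convolution). -/
def fmul (u v : ℤ → ℂ) : ℤ → ℂ := fun n => ∑' m : ℤ, u (n - m) * v m

/-- Projection onto positive frequencies, `C₊`. -/
def Cplus (u : ℤ → ℂ) : ℤ → ℂ := fun n => if 0 < n then u n else 0

/-- Projection onto negative frequencies, `C₋`. -/
def Cminus (u : ℤ → ℂ) : ℤ → ℂ := fun n => if n < 0 then u n else 0

/-- Projection onto the zero mode (spatial mean), `P₀`. -/
def P0 (u : ℤ → ℂ) : ℤ → ℂ := fun n => if n = 0 then u 0 else 0

/-- Membership in the positive-frequency space `H₊^{ρ,s}`. -/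
def MemHplus (ρ s : ℝ) (u : ℤ → ℂ) : Prop :=
  MemH ρ s u ∧ ∀ n : ℤ, n ≤ 0 → u n = 0

/-- Coefficients of the constant function `1`. -/
def delta0 : ℤ → ℂ := fun n => if n = 0 then 1 else 0

/-- Spatial derivative `∂ₓ` (multiplier `i n`). -/
def dx (u : ℤ → ℂ) : ℤ → ℂ := fun n => Complex.I * (n : ℂ) * u n

/-- Coefficients of the complex conjugate function. -/
def conjFun (u : ℤ → ℂ) : ℤ → ℂ := fun n => (starRingEnd ℂ) (u (-n))

/-- The Toeplitz operator `T_u f = C₊(uf)`. -/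
def Toep (u f : ℤ → ℂ) : ℤ → ℂ := Cplus (fmul u f)

/-- The Lax operator `L_u f = -2i∂ₓ f + C₊(uf)` (multiplier `2n` plus Toeplitz). -/
def LaxOp (u f : ℤ → ℂ) : ℤ → ℂ := fun n => 2 * (n : ℂ) * f n + Toep u f n

/-- The free resolvent `R₀(κ) = (L₀+κ)⁻¹` on positive frequencies. -/
def R0 (κ : ℝ) (u : ℤ → ℂ) : ℤ → ℂ :=
  fun n => if 0 < n then (2 * (n : ℂ) + (κ : ℂ))⁻¹ * u n else 0

/-- The algebra constant `C_s = 2^{s+1} (Σ_k ⟨k⟩^{-2s})^{1/2}` of `H^{ρ,s}`. -/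
def Cs (s : ℝ) : ℝ := (2 : ℝ) ^ (s + 1) * Real.sqrt (∑' k : ℤ, jb k ^ (-(2 * s)))

/-- Positive integer frequencies. -/
abbrev PosZ := {n : ℤ // 0 < n}

/-- The Hardy space `L²₊(𝕋)` in Fourier coordinates. -/
abbrev Hardy := lp (fun _ : PosZ => ℂ) 2

/-- The `H¹₊` subset of the Hardy space. -/
def H1set : Set Hardy := {f | Summable fun n : PosZ => (1 + ((n : ℤ) : ℝ) ^ 2) * ‖f n‖ ^ 2}

/-- `L²` norm of a positive-frequency coefficient sequence. -/
def l2p (f : PosZ → ℂ) : ℝ := Real.sqrt (∑' n : PosZ, ‖f n‖ ^ 2)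

/-- Action of the Lax operator `L_v` on positive-frequency coefficients. -/
def laxC (v : ℤ → ℂ) (f : PosZ → ℂ) : PosZ → ℂ :=
  fun n => 2 * ((n : ℤ) : ℂ) * f n + ∑' m : PosZ, v ((n : ℤ) - (m : ℤ)) * f m

/-- Exponentially shifted symbol: `(eshift σ v)(k) = e^{σ k} v(k)`. -/
def eshift (σ : ℝ) (v : ℤ → ℂ) : ℤ → ℂ := fun k => (Real.exp (σ * (k : ℝ)) : ℂ) * v k

/-- `ψ = e^{(ρ/2)L_v} v₊`, characterized by the backward flow
`φ(τ) = e^{(ρ/2-τ)L_v} v₊`: a strongly `C¹` curve in `H¹₊ ⊂ L²₊` with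
`φ' = -L_v φ`, `φ(0) = ψ` and `φ(ρ/2) = v₊`. -/
def IsSpecState (ρ : ℝ) (v : ℤ → ℂ) (ψ : PosZ → ℂ) : Prop :=
  ∃ φ : ℝ → PosZ → ℂ,
    φ 0 = ψ ∧
    (∀ n : PosZ, φ (ρ / 2) n = v (n : ℤ)) ∧
    (∀ τ ∈ Set.Icc (0 : ℝ) (ρ / 2),
      Summable fun n : PosZ => (1 + ((n : ℤ) : ℝ) ^ 2) * ‖φ τ n‖ ^ 2) ∧
    (∀ τ ∈ Set.Icc (0 : ℝ) (ρ / 2),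
      Filter.Tendsto
        (fun τ' : ℝ =>
          l2p (fun n => φ τ' n - φ τ n + ((τ' - τ : ℝ) : ℂ) * laxC v (φ τ) n) / |τ' - τ|)
        (nhdsWithin τ (Set.Icc (0 : ℝ) (ρ / 2) \ {τ})) (nhds 0))

/-- The exponential spectral energy `E_ρ(v) = ‖ψ_v‖² + ‖(1/2)L_v ψ_v‖²`
expressed through the state `ψ = e^{(ρ/2)L_v}v₊`. -/
def Erho (v : ℤ → ℂ) (ψ : PosZ → ℂ) : ℝ :=
  (∑' n : PosZ, ‖ψ n‖ ^ 2) + (1 / 4) * ∑' n : PosZ, ‖laxC v ψ n‖ ^ 2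

/-- The geometric constant `c₁ = (1/2)(π²/6 - (π coth π - 1)/2)^{1/2}`. -/
def c1const : ℝ :=
  (1 / 2) * Real.sqrt (Real.pi ^ 2 / 6 -
    (Real.pi * (Real.cosh Real.pi / Real.sinh Real.pi) - 1) / 2)

/-- The geometric constant `c₂ = (π coth π - 1)^{1/2}`. -/
def c2const : ℝ :=
  Real.sqrt (Real.pi * (Real.cosh Real.pi / Real.sinh Real.pi) - 1)

/-- The geometric bounding function `f(x) = (1/√2) e^{-c₁x}(x - (√2/2)c₂x²)`. -/
def fbar (c₁ c₂ x : ℝ) : ℝ :=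
  (1 / Real.sqrt 2) * Real.exp (-c₁ * x) * (x - (Real.sqrt 2 / 2) * c₂ * x ^ 2)

/-- `m` is the resolvent gauge variable `m(κ,u) = (L_u+κ)⁻¹ u₊`:
the unique positive-frequency `ℓ²` solution of `(L_u+κ)m = u₊`. -/
def IsGauge (κ : ℝ) (u m : ℤ → ℂ) : Prop :=
  (∀ n : ℤ, n ≤ 0 → m n = 0) ∧ (Summable fun n : ℤ => ‖m n‖ ^ 2) ∧
  ∀ n : ℤ, LaxOp u m n + (κ : ℂ) * m n = Cplus u n

-- The gauge variable, selected by choice (it is unique for `κ` large).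
open scoped Classical in
def gauge (κ : ℝ) (u : ℤ → ℂ) : ℤ → ℂ :=
  if h : ∃ m : ℤ → ℂ, IsGauge κ u m then h.choose else 0

/-- The spectral generating functional `β(κ;u) = ⟨u₊, m(κ,u)⟩_{L²}`. -/
def beta (κ : ℝ) (u : ℤ → ℂ) : ℂ :=
  ∑' n : ℤ, Cplus u n * (starRingEnd ℂ) (gauge κ u n)

/-- Right-hand side of the Benjamin–Ono equation,
`∂ₜ u = -H∂ₓₓu - u∂ₓu` (the multiplier of `H∂ₓₓ` is `i n |n|`). -/
def BOrhs (u : ℤ → ℂ) : ℤ → ℂ :=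
  fun n => -(Complex.I * (n : ℂ) * ((|n| : ℤ) : ℂ) * u n) - fmul u (dx u) n

/-- `u` is a global solution of the regularized `H_κ` flow
`∂ₜu = -(κ/2)∂ₓu + (κ²/2)∂ₓ(m + m̄ - |m|²)` with data `u₀`,
continuous in time with values in `H₀^{ρ,1}`. -/
def IsHkFlow (ρ κ : ℝ) (u₀ : ℤ → ℂ) (u : ℝ → ℤ → ℂ) : Prop :=
  u 0 = u₀ ∧
  (∀ t : ℝ, MemH ρ 1 (u t) ∧ u t 0 = 0 ∧ IsReal (u t)) ∧
  (∀ t₀ : ℝ, Filter.Tendsto (fun t => anorm ρ 1 (fun n => u t n - u t₀ n))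
      (nhds t₀) (nhds 0)) ∧
  (∀ t : ℝ, ∃ m : ℤ → ℂ, IsGauge κ (u t) m ∧
    ∀ n : ℤ, HasDerivAt (fun t' => u t' n)
      (-((κ : ℂ) / 2) * (Complex.I * (n : ℂ) * u t n) +
        ((κ : ℂ) ^ 2 / 2) * (Complex.I * (n : ℂ) *
          (m n + conjFun m n - fmul m (conjFun m) n))) t)

/-- `u` is a global classical solution of the Benjamin–Ono equation with data `u₀`:
for every `T > 0` and `ε ∈ (0,ρ/6)` it lies in
`C¹([-T,T]; H₀^{ρ-3ε,1}) ∩ C([-T,T]; H₀^{ρ-ε,1})` and satisfies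
`∂ₜu = -H∂ₓₓu - u∂ₓu` (time derivative in `H₀^{ρ-3ε,1}`). -/
def IsBOSol (ρ : ℝ) (u₀ : ℤ → ℂ) (u : ℝ → ℤ → ℂ) : Prop :=
  u 0 = u₀ ∧
  (∀ t : ℝ, u t 0 = 0 ∧ IsReal (u t)) ∧
  ∀ T > (0 : ℝ), ∀ ε ∈ Set.Ioo (0 : ℝ) (ρ / 6),
    (∀ t ∈ Set.Icc (-T) T, MemH (ρ - ε) 1 (u t)) ∧
    (∀ t₀ ∈ Set.Icc (-T) T,
      Filter.Tendsto (fun t => anorm (ρ - ε) 1 (fun n => u t n - u t₀ n))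
        (nhdsWithin t₀ (Set.Icc (-T) T)) (nhds 0)) ∧
    (∀ t₀ ∈ Set.Icc (-T) T, MemH (ρ - 3 * ε) 1 (BOrhs (u t₀)) ∧
      Filter.Tendsto (fun t =>
          anorm (ρ - 3 * ε) 1
            (fun n => u t n - u t₀ n - ((t - t₀ : ℝ) : ℂ) * BOrhs (u t₀) n) / |t - t₀|)
        (nhdsWithin t₀ (Set.Icc (-T) T \ {t₀})) (nhds 0)) ∧
    (∀ t₀ ∈ Set.Icc (-T) T,
      Filter.Tendsto (fun t => anorm (ρ - 3 * ε) 1 (fun n => BOrhs (u t) n - BOrhs (u t₀) n))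
        (nhdsWithin t₀ (Set.Icc (-T) T)) (nhds 0))


/-! ### Auxiliary lemmas for `gauge_lipschitz` -/

lemma jb_pos (n : ℤ) : 0 < jb n := Real.sqrt_pos.2 (by positivity)

lemma one_le_jb (n : ℤ) : 1 ≤ jb n := by
  have := Real.sqrt_le_sqrt (show (1:ℝ) ≤ 1 + (n:ℝ)^2 by nlinarith [sq_nonneg ((n:ℝ))])
  simpa [jb] using this

lemma jb_sq (n : ℤ) : jb n ^ 2 = 1 + (n : ℝ) ^ 2 := Real.sq_sqrt (by positivity)

lemma abs_le_jb (n : ℤ) : |(n:ℝ)| ≤ jb n := by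
  rw [jb, show |(n:ℝ)| = Real.sqrt ((n:ℝ)^2) by rw [Real.sqrt_sq_eq_abs]]
  exact Real.sqrt_le_sqrt (by nlinarith)

lemma jb_add (a b : ℤ) : jb (a + b) ≤ jb a + jb b := by
  have h2 : (a:ℝ) * b ≤ jb a * jb b := by
    calc (a:ℝ) * b ≤ |(a:ℝ)*b| := le_abs_self _
    _ = |(a:ℝ)| * |(b:ℝ)| := abs_mul _ _
    _ ≤ jb a * jb b := by
        exact mul_le_mul (abs_le_jb a) (abs_le_jb b) (abs_nonneg _) ((jb_pos a).le)
  have key : 1 + ((a:ℝ)+b)^2 ≤ (jb a + jb b)^2 := by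
    nlinarith [jb_sq a, jb_sq b]
  calc jb (a+b) = Real.sqrt (1 + ((a:ℝ)+b)^2) := by rw [jb]; push_cast; ring_nf
  _ ≤ Real.sqrt ((jb a + jb b)^2) := Real.sqrt_le_sqrt key
  _ = jb a + jb b := Real.sqrt_sq (by nlinarith [jb_pos a, jb_pos b])

lemma wt1_eq (ρ : ℝ) (n : ℤ) : wt ρ 1 n = jb n * Real.exp (ρ * |(n:ℝ)|) := by
  rw [wt, Real.rpow_one]

lemma wt_pos (ρ : ℝ) (n : ℤ) : 0 < wt ρ 1 n := by
  rw [wt1_eq]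
  have := jb_pos n
  positivity

lemma one_le_wt {ρ : ℝ} (hρ : 0 ≤ ρ) (n : ℤ) : 1 ≤ wt ρ 1 n := by
  rw [wt1_eq]
  have h1 : 1 ≤ Real.exp (ρ * |(n:ℝ)|) :=
    Real.one_le_exp (by positivity)
  nlinarith [one_le_jb n]

lemma wt_subadd {ρ : ℝ} (hρ : 0 ≤ ρ) (n m : ℤ) :
    wt ρ 1 n ≤ wt ρ 1 (n - m) * Real.exp (ρ * |(m:ℝ)|)
      + Real.exp (ρ * |((n - m : ℤ):ℝ)|) * wt ρ 1 m := by
  have habs : |(n:ℝ)| ≤ |((n-m:ℤ):ℝ)| + |(m:ℝ)| := by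
    push_cast
    calc |(n:ℝ)| = |((n:ℝ)-m) + m| := by ring_nf
    _ ≤ _ := abs_add_le _ _
  have hexp : Real.exp (ρ * |(n:ℝ)|) ≤
      Real.exp (ρ * |((n-m:ℤ):ℝ)|) * Real.exp (ρ * |(m:ℝ)|) := by
    rw [← Real.exp_add]
    exact Real.exp_le_exp.2 (by nlinarith)
  have hjb : jb n ≤ jb (n-m) + jb m := by
    have := jb_add (n-m) m; simpa using this
  calc wt ρ 1 n = jb n * Real.exp (ρ * |(n:ℝ)|) := wt1_eq ρ n
  _ ≤ (jb (n-m) + jb m) * (Real.exp (ρ * |((n-m:ℤ):ℝ)|) * Real.exp (ρ * |(m:ℝ)|)) := by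
      apply mul_le_mul hjb hexp (Real.exp_pos _).le
      nlinarith [jb_pos (n-m), jb_pos m]
  _ = _ := by rw [wt1_eq, wt1_eq]; ring

/-! ### generic ℓ² lemmas -/

lemma tsum_CS {x y : ℤ → ℝ} (hx0 : ∀ n, 0 ≤ x n) (hy0 : ∀ n, 0 ≤ y n)
    (hx : Summable fun n => x n ^ 2) (hy : Summable fun n => y n ^ 2) :
    Summable (fun n => x n * y n) ∧
    ∑' n, x n * y n ≤ Real.sqrt (∑' n, x n ^ 2) * Real.sqrt (∑' n, y n ^ 2) := by
  have hsum : Summable (fun n => x n * y n) := by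
    apply Summable.of_nonneg_of_le (fun n => mul_nonneg (hx0 n) (hy0 n))
      (fun n => ?_) ((hx.add hy).mul_left (1/2))
    nlinarith [sq_nonneg (x n - y n)]
  refine ⟨hsum, Summable.tsum_le_of_sum_le hsum fun s => ?_⟩
  have hCS := Finset.sum_mul_sq_le_sq_mul_sq s x y
  have h1 : ∑ i ∈ s, x i * y i ≤
      Real.sqrt ((∑ i ∈ s, x i ^ 2) * ∑ i ∈ s, y i ^ 2) := by
    rw [show (∑ i ∈ s, x i * y i) = Real.sqrt ((∑ i ∈ s, x i * y i)^2) from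
      (Real.sqrt_sq (Finset.sum_nonneg fun i _ => mul_nonneg (hx0 i) (hy0 i))).symm]
    exact Real.sqrt_le_sqrt hCS
  refine h1.trans ?_
  rw [Real.sqrt_mul (Finset.sum_nonneg fun i _ => sq_nonneg _)]
  apply mul_le_mul (Real.sqrt_le_sqrt (Summable.sum_le_tsum s (fun i _ => sq_nonneg _) hx))
    (Real.sqrt_le_sqrt (Summable.sum_le_tsum s (fun i _ => sq_nonneg _) hy))
    (Real.sqrt_nonneg _) (Real.sqrt_nonneg _)

lemma tsum_sqrt_mono {x y : ℤ → ℝ} (h : ∀ n, x n ≤ y n) (hx0 : ∀ n, 0 ≤ x n)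
    (hy : Summable fun n => y n ^ 2) :
    Summable (fun n => x n ^ 2) ∧
    Real.sqrt (∑' n, x n ^ 2) ≤ Real.sqrt (∑' n, y n ^ 2) := by
  have hsq : ∀ n, x n ^ 2 ≤ y n ^ 2 := fun n => by nlinarith [hx0 n, h n]
  have hs : Summable (fun n => x n ^ 2) :=
    Summable.of_nonneg_of_le (fun n => sq_nonneg _) hsq hy
  exact ⟨hs, Real.sqrt_le_sqrt (Summable.tsum_le_tsum hsq hs hy)⟩

lemma tsum_sqrt_triangle {x y : ℤ → ℝ} (hx0 : ∀ n, 0 ≤ x n) (hy0 : ∀ n, 0 ≤ y n)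
    (hx : Summable fun n => x n ^ 2) (hy : Summable fun n => y n ^ 2) :
    Summable (fun n => (x n + y n) ^ 2) ∧
    Real.sqrt (∑' n, (x n + y n) ^ 2) ≤
      Real.sqrt (∑' n, x n ^ 2) + Real.sqrt (∑' n, y n ^ 2) := by
  obtain ⟨hxy, hCS⟩ := tsum_CS hx0 hy0 hx hy
  have hexp : ∀ n, (x n + y n)^2 = x n^2 + (2 * (x n * y n) + y n ^2) := fun n => by ring
  have hs : Summable (fun n => (x n + y n)^2) := by
    simp_rw [hexp]; exact hx.add ((hxy.mul_left 2).add hy)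
  refine ⟨hs, ?_⟩
  set X := Real.sqrt (∑' n, x n ^ 2)
  set Y := Real.sqrt (∑' n, y n ^ 2)
  have hX : ∑' n, x n ^2 = X^2 := (Real.sq_sqrt (tsum_nonneg fun n => sq_nonneg _)).symm
  have hY : ∑' n, y n ^2 = Y^2 := (Real.sq_sqrt (tsum_nonneg fun n => sq_nonneg _)).symm
  have ht : ∑' n, (x n + y n)^2 ≤ (X + Y)^2 := by
    calc ∑' n, (x n + y n)^2
        = (∑' n, x n^2) + ((∑' n, 2 * (x n * y n)) + ∑' n, y n^2) := by
          simp_rw [hexp]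
          rw [Summable.tsum_add hx ((hxy.mul_left 2).add hy), Summable.tsum_add (hxy.mul_left 2) hy]
    _ = (∑' n, x n^2) + (2 * (∑' n, x n * y n) + ∑' n, y n^2) := by rw [tsum_mul_left]
    _ ≤ X^2 + (2 * (X * Y) + Y^2) := by
        rw [hX, hY]
        nlinarith [hCS]
    _ = (X + Y)^2 := by ring
  calc Real.sqrt (∑' n, (x n + y n)^2) ≤ Real.sqrt ((X+Y)^2) := Real.sqrt_le_sqrt ht
  _ = X + Y := Real.sqrt_sq (by positivity)

/-- Young's inequality `ℓ¹ ∗ ℓ² ⊆ ℓ²` for nonnegative sequences on `ℤ`. -/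
lemma young {g h : ℤ → ℝ} (hg0 : ∀ k, 0 ≤ g k) (hh0 : ∀ k, 0 ≤ h k)
    (hg : Summable g) (hh : Summable fun k => h k ^ 2) :
    Summable (fun n => (∑' m, g (n - m) * h m) ^ 2) ∧
    Real.sqrt (∑' n, (∑' m, g (n - m) * h m) ^ 2) ≤
      (∑' k, g k) * Real.sqrt (∑' k, h k ^ 2) := by
  set G := ∑' k, g k with hG
  have hG0 : 0 ≤ G := tsum_nonneg fun k => hg0 k
  have hgs : ∀ n : ℤ, Summable (fun m => g (n - m)) := fun n =>
    (Equiv.subLeft n).summable_iff.2 hg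
  have hgt : ∀ n : ℤ, (∑' m, g (n - m)) = G := fun n => (Equiv.subLeft n).tsum_eq g
  have hgb : ∀ k, g k ≤ G := fun k => Summable.le_tsum hg k fun j _ => hg0 j
  have hgt' : ∀ m : ℤ, (∑' n, g (n - m)) = G := fun m => (Equiv.subRight m).tsum_eq g
  have hslice : ∀ n : ℤ, Summable (fun m => g (n - m) * h m ^ 2) := by
    intro n
    apply Summable.of_nonneg_of_le (fun m => mul_nonneg (hg0 _) (sq_nonneg _))
      (fun m => mul_le_mul_of_nonneg_right (hgb _) (sq_nonneg _)) (hh.mul_left G)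
  set d := fun n : ℤ => ∑' m, g (n - m) * h m ^ 2 with hd
  have hprod : Summable (fun p : ℤ × ℤ => g (p.1 - p.2) * h p.2 ^ 2) := by
    have base : Summable (fun p : ℤ × ℤ => g p.1 * h p.2 ^ 2) :=
      hg.mul_of_nonneg hh (fun k => hg0 k) (fun k => sq_nonneg _)
    let e : ℤ × ℤ ≃ ℤ × ℤ :=
      ⟨fun p => (p.1 + p.2, p.2), fun p => (p.1 - p.2, p.2),
        fun p => by simp, fun p => by simp⟩
    apply e.summable_iff.1
    refine base.congr fun p => ?_
    simp [e]
  have hdsum : Summable d := by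
    have := (summable_prod_of_nonneg
      (f := fun p : ℤ × ℤ => g (p.1 - p.2) * h p.2 ^ 2)
      (fun p => mul_nonneg (hg0 _) (sq_nonneg _))).1 hprod
    exact this.2
  have hdval : ∑' n, d n = G * ∑' k, h k ^ 2 := by
    have hcomm : ∑' n, ∑' m, g (n - m) * h m ^ 2
        = ∑' m, ∑' n, g (n - m) * h m ^ 2 :=
      Summable.tsum_comm (f := fun m n => g (n - m) * h m ^ 2) hprod.prod_symm
    rw [hd]
    simp only [hcomm]
    calc ∑' m, ∑' n, g (n - m) * h m ^ 2
        = ∑' m, (∑' n, g (n - m)) * h m ^ 2 := by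
          refine tsum_congr fun m => ?_
          rw [tsum_mul_right]
    _ = ∑' m, G * h m ^ 2 := by
          refine tsum_congr fun m => by rw [hgt']
    _ = G * ∑' k, h k ^ 2 := tsum_mul_left
  set c := fun n : ℤ => ∑' m, g (n - m) * h m with hc
  have hc0 : ∀ n, 0 ≤ c n := fun n => tsum_nonneg fun m => mul_nonneg (hg0 _) (hh0 _)
  have hkey : ∀ n, c n ^ 2 ≤ G * d n := by
    intro n
    have hx0 : ∀ m : ℤ, (0:ℝ) ≤ Real.sqrt (g (n - m)) := fun m => Real.sqrt_nonneg _
    have hy0 : ∀ m : ℤ, (0:ℝ) ≤ Real.sqrt (g (n - m)) * h m :=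
      fun m => mul_nonneg (Real.sqrt_nonneg _) (hh0 m)
    have hxs : Summable (fun m => Real.sqrt (g (n - m)) ^ 2) := by
      refine (hgs n).congr fun m => ?_
      rw [Real.sq_sqrt (hg0 _)]
    have hys : Summable (fun m => (Real.sqrt (g (n - m)) * h m) ^ 2) := by
      refine (hslice n).congr fun m => ?_
      rw [mul_pow, Real.sq_sqrt (hg0 _)]
    obtain ⟨_, hCS⟩ := tsum_CS hx0 hy0 hxs hys
    have hxy : ∀ m : ℤ, Real.sqrt (g (n - m)) * (Real.sqrt (g (n - m)) * h m)
        = g (n - m) * h m := by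
      intro m
      rw [← mul_assoc, Real.mul_self_sqrt (hg0 _)]
    have hCS' : c n ≤ Real.sqrt (∑' m, Real.sqrt (g (n-m)) ^2) *
        Real.sqrt (∑' m, (Real.sqrt (g (n-m)) * h m) ^2) := by
      calc c n = ∑' m, Real.sqrt (g (n - m)) * (Real.sqrt (g (n - m)) * h m) := by
            rw [hc]; exact (tsum_congr hxy).symm
      _ ≤ _ := hCS
    have e1 : (∑' m, Real.sqrt (g (n-m)) ^2) = G := by
      rw [← hgt n]; exact tsum_congr fun m => Real.sq_sqrt (hg0 _)
    have e2 : (∑' m, (Real.sqrt (g (n-m)) * h m) ^2) = d n := by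
      refine tsum_congr fun m => ?_
      rw [mul_pow, Real.sq_sqrt (hg0 _)]
    rw [e1, e2] at hCS'
    calc c n ^ 2 ≤ (Real.sqrt G * Real.sqrt (d n))^2 := by
          apply pow_le_pow_left₀ (hc0 n) hCS'
    _ = G * d n := by
          rw [mul_pow, Real.sq_sqrt hG0, Real.sq_sqrt
            (tsum_nonneg fun m => mul_nonneg (hg0 _) (sq_nonneg _))]
  have hcs : Summable (fun n => c n ^ 2) :=
    Summable.of_nonneg_of_le (fun n => sq_nonneg _) hkey (hdsum.mul_left G)
  refine ⟨hcs, ?_⟩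
  have hle : ∑' n, c n ^ 2 ≤ G^2 * ∑' k, h k ^2 := by
    calc ∑' n, c n ^2 ≤ ∑' n, G * d n := Summable.tsum_le_tsum hkey hcs (hdsum.mul_left G)
    _ = G * ∑' n, d n := tsum_mul_left
    _ = G^2 * ∑' k, h k ^2 := by rw [hdval]; ring
  calc Real.sqrt (∑' n, c n ^2) ≤ Real.sqrt (G^2 * ∑' k, h k^2) := Real.sqrt_le_sqrt hle
  _ = G * Real.sqrt (∑' k, h k ^2) := by
      rw [Real.sqrt_mul (sq_nonneg _), Real.sqrt_sq hG0]

lemma summable_shift {x : ℤ → ℝ} (hx : Summable x) (n : ℤ) :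
    Summable fun m => x (n - m) :=
  (Equiv.subLeft n).summable_iff.2 hx

/-! ### the algebra constant -/

lemma Ksummable : Summable (fun k : ℤ => ((jb k)⁻¹) ^ 2) := by
  have hval : ∀ k : ℤ, ((jb k)⁻¹) ^ 2 = (1 + (k:ℝ)^2)⁻¹ := by
    intro k
    rw [inv_pow, jb_sq]
  have hnat : Summable (fun n : ℕ => (1 + (n:ℝ)^2)⁻¹) := by
    have hbase : Summable (fun n : ℕ => (((n:ℝ)+1)^2)⁻¹) := by
      have := (summable_nat_add_iff (f := fun n : ℕ => ((n:ℝ)^2)⁻¹) 1).2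
        (Real.summable_nat_pow_inv.2 one_lt_two)
      refine this.congr fun n => ?_
      push_cast
      ring_nf
    apply Summable.of_nonneg_of_le (fun n => by positivity) (fun n => ?_) (hbase.mul_left 2)
    have h1 : (0:ℝ) < 1 + (n:ℝ)^2 := by positivity
    have h2 : (0:ℝ) < ((n:ℝ)+1)^2 := by positivity
    rw [inv_eq_one_div, inv_eq_one_div, mul_one_div, div_le_div_iff₀ h1 h2]
    nlinarith [sq_nonneg ((n:ℝ) - 1)]
  have hint : Summable (fun k : ℤ => (1 + (k:ℝ)^2)⁻¹) := by
    apply Summable.of_nat_of_neg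
    · exact hnat.congr fun n => by norm_num
    · refine hnat.congr fun n => ?_
      push_cast
      ring_nf
  exact hint.congr fun k => (hval k).symm

lemma Cs_one_eq : Cs 1 = 4 * Real.sqrt (∑' k : ℤ, ((jb k)⁻¹) ^ 2) := by
  rw [Cs]
  have h1 : ((2:ℝ) ^ ((1:ℝ) + 1)) = 4 := by
    rw [show ((1:ℝ)+1) = ((2:ℕ):ℝ) by norm_num, Real.rpow_natCast]
    norm_num
  have h2 : ∀ k : ℤ, jb k ^ (-(2 * (1:ℝ))) = ((jb k)⁻¹) ^ 2 := by
    intro k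
    rw [show (-(2 * (1:ℝ))) = ((-2 : ℤ) : ℝ) by norm_num, Real.rpow_intCast]
    rw [zpow_neg, inv_pow]
    norm_num [zpow_two, sq]
  rw [h1, tsum_congr h2]

lemma one_le_sqrtK : 1 ≤ Real.sqrt (∑' k : ℤ, ((jb k)⁻¹) ^ 2) := by
  have h0 : ((jb 0)⁻¹) ^ 2 = 1 := by
    have : jb 0 = 1 := by rw [jb]; norm_num
    rw [this]; norm_num
  have hle : (1:ℝ) ≤ ∑' k : ℤ, ((jb k)⁻¹) ^ 2 := by
    rw [← h0]
    exact Summable.le_tsum Ksummable 0 fun j _ => sq_nonneg _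
  calc (1:ℝ) = Real.sqrt 1 := by simp
  _ ≤ _ := Real.sqrt_le_sqrt hle

lemma four_le_Cs_one : 4 ≤ Cs 1 := by
  rw [Cs_one_eq]
  nlinarith [one_le_sqrtK]

lemma Cs_one_pos : 0 < Cs 1 := by linarith [four_le_Cs_one]

/-! ### anorm utilities -/

lemma memH_sq {ρ : ℝ} {f : ℤ → ℂ} (hf : MemH ρ 1 f) :
    Summable fun n => (wt ρ 1 n * ‖f n‖) ^ 2 :=
  hf.congr fun n => (mul_pow _ _ 2).symm

lemma anorm_eq' (ρ : ℝ) (f : ℤ → ℂ) :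
    anorm ρ 1 f = Real.sqrt (∑' n, (wt ρ 1 n * ‖f n‖) ^ 2) := by
  rw [anorm]
  congr 1
  exact tsum_congr fun n => (mul_pow _ _ 2).symm

lemma anorm_nonneg (ρ s : ℝ) (f : ℤ → ℂ) : 0 ≤ anorm ρ s f := Real.sqrt_nonneg _

lemma l2_of_memH {ρ : ℝ} (hρ : 0 ≤ ρ) {f : ℤ → ℂ} (hf : MemH ρ 1 f) :
    Summable fun n => ‖f n‖ ^ 2 := by
  apply Summable.of_nonneg_of_le (fun n => sq_nonneg _) (fun n => ?_) hf
  have h1 := one_le_wt hρ n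
  have h2 : (1:ℝ) ≤ wt ρ 1 n ^ 2 := by nlinarith [sq_nonneg (wt ρ 1 n - 1)]
  have h3 := mul_le_mul_of_nonneg_right h2 (sq_nonneg (‖f n‖))
  simpa using h3

lemma anorm_mono {ρ : ℝ} {x y : ℤ → ℂ} (hxy : ∀ n, ‖x n‖ ≤ ‖y n‖)
    (hy : MemH ρ 1 y) : MemH ρ 1 x ∧ anorm ρ 1 x ≤ anorm ρ 1 y := by
  obtain ⟨hs, hb⟩ := tsum_sqrt_mono
    (x := fun n => wt ρ 1 n * ‖x n‖) (y := fun n => wt ρ 1 n * ‖y n‖)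
    (fun n => mul_le_mul_of_nonneg_left (hxy n) (wt_pos ρ n).le)
    (fun n => mul_nonneg (wt_pos ρ n).le (norm_nonneg _)) (memH_sq hy)
  refine ⟨hs.congr fun n => mul_pow _ _ 2, ?_⟩
  rw [anorm_eq', anorm_eq']
  exact hb

lemma memH_sub {ρ : ℝ} {x y : ℤ → ℂ} (hx : MemH ρ 1 x) (hy : MemH ρ 1 y) :
    MemH ρ 1 (fun n => x n - y n) ∧
    anorm ρ 1 (fun n => x n - y n) ≤ anorm ρ 1 x + anorm ρ 1 y := by
  obtain ⟨hs, hb⟩ := tsum_sqrt_triangle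
    (x := fun n => wt ρ 1 n * ‖x n‖) (y := fun n => wt ρ 1 n * ‖y n‖)
    (fun n => mul_nonneg (wt_pos ρ n).le (norm_nonneg _))
    (fun n => mul_nonneg (wt_pos ρ n).le (norm_nonneg _)) (memH_sq hx) (memH_sq hy)
  have hpt : ∀ n, wt ρ 1 n * ‖x n - y n‖ ≤
      wt ρ 1 n * ‖x n‖ + wt ρ 1 n * ‖y n‖ := by
    intro n
    rw [← mul_add]
    exact mul_le_mul_of_nonneg_left (norm_sub_le _ _) (wt_pos ρ n).le
  obtain ⟨hs2, hb2⟩ := tsum_sqrt_mono hpt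
    (fun n => mul_nonneg (wt_pos ρ n).le (norm_nonneg _)) hs
  refine ⟨hs2.congr fun n => mul_pow _ _ 2, ?_⟩
  rw [anorm_eq', anorm_eq', anorm_eq']
  exact hb2.trans hb

lemma anorm_const_mul {ρ : ℝ} (c : ℝ) {y : ℤ → ℂ} (hy : MemH ρ 1 y) :
    MemH ρ 1 (fun n => (c:ℂ) * y n) ∧
    anorm ρ 1 (fun n => (c:ℂ) * y n) = |c| * anorm ρ 1 y := by
  have hpt : ∀ n : ℤ, (wt ρ 1 n * ‖(c:ℂ) * y n‖)^2 = c^2 * (wt ρ 1 n * ‖y n‖)^2 := by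
    intro n
    rw [norm_mul, Complex.norm_real, Real.norm_eq_abs]
    rw [show wt ρ 1 n * (|c| * ‖y n‖) = |c| * (wt ρ 1 n * ‖y n‖) by ring]
    rw [mul_pow, sq_abs]
  constructor
  · refine (hy.mul_left (c^2)).congr fun n => ?_
    rw [norm_mul, Complex.norm_real, Real.norm_eq_abs, mul_pow, sq_abs]
    ring
  · rw [anorm_eq', anorm_eq']
    rw [tsum_congr hpt, tsum_mul_left, Real.sqrt_mul (sq_nonneg c), Real.sqrt_sq_eq_abs]

lemma cplus_norm_le (g : ℤ → ℂ) (n : ℤ) : ‖Cplus g n‖ ≤ ‖g n‖ := by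
  rw [Cplus]
  split
  · exact le_refl _
  · simp

/-! ### convolution summability and algebra bound -/

lemma conv_summand {a f : ℤ → ℂ} (ha2 : Summable fun k => ‖a k‖ ^ 2)
    (hf2 : Summable fun k => ‖f k‖ ^ 2) (n : ℤ) :
    Summable (fun m => ‖a (n - m)‖ * ‖f m‖) := by
  have hx : Summable fun m => ‖a (n - m)‖ ^ 2 := summable_shift ha2 n
  exact (tsum_CS (fun m => norm_nonneg _) (fun m => norm_nonneg _) hx hf2).1

lemma conv_summand' {a f : ℤ → ℂ} (ha2 : Summable fun k => ‖a k‖ ^ 2)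
    (hf2 : Summable fun k => ‖f k‖ ^ 2) (n : ℤ) :
    Summable (fun m => a (n - m) * f m) := by
  apply Summable.of_norm
  exact (conv_summand ha2 hf2 n).congr fun m => (norm_mul _ _).symm

theorem conv_bound {ρ : ℝ} (hρ : 0 < ρ) {a f : ℤ → ℂ}
    (ha : MemH ρ 1 a) (hf : MemH ρ 1 f) :
    MemH ρ 1 (fmul a f) ∧
    anorm ρ 1 (fmul a f) ≤ Cs 1 * anorm ρ 1 a * anorm ρ 1 f := by
  have hρ0 : 0 ≤ ρ := hρ.le
  set A := fun k : ℤ => wt ρ 1 k * ‖a k‖ with hA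
  set F := fun k : ℤ => wt ρ 1 k * ‖f k‖ with hF
  set A' := fun k : ℤ => Real.exp (ρ * |(k:ℝ)|) * ‖a k‖ with hA'
  set F' := fun k : ℤ => Real.exp (ρ * |(k:ℝ)|) * ‖f k‖ with hF'
  have hA0 : ∀ k, 0 ≤ A k := fun k => mul_nonneg (wt_pos ρ k).le (norm_nonneg _)
  have hF0 : ∀ k, 0 ≤ F k := fun k => mul_nonneg (wt_pos ρ k).le (norm_nonneg _)
  have hA'0 : ∀ k, 0 ≤ A' k := fun k => mul_nonneg (Real.exp_pos _).le (norm_nonneg _)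
  have hF'0 : ∀ k, 0 ≤ F' k := fun k => mul_nonneg (Real.exp_pos _).le (norm_nonneg _)
  have hAs : Summable fun k => A k ^ 2 := memH_sq ha
  have hFs : Summable fun k => F k ^ 2 := memH_sq hf
  have hAinv : ∀ k, A' k = (jb k)⁻¹ * A k := by
    intro k
    show Real.exp (ρ * |(k:ℝ)|) * ‖a k‖ = (jb k)⁻¹ * (wt ρ 1 k * ‖a k‖)
    rw [wt1_eq]
    field_simp [(jb_pos k).ne']
  have hFinv : ∀ k, F' k = (jb k)⁻¹ * F k := by
    intro k
    show Real.exp (ρ * |(k:ℝ)|) * ‖f k‖ = (jb k)⁻¹ * (wt ρ 1 k * ‖f k‖)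
    rw [wt1_eq]
    field_simp [(jb_pos k).ne']
  obtain ⟨hA'sum0, hA'le0⟩ := tsum_CS (x := fun k => (jb k)⁻¹) (y := A)
    (fun k => (inv_nonneg).2 (jb_pos k).le) hA0 Ksummable hAs
  obtain ⟨hF'sum0, hF'le0⟩ := tsum_CS (x := fun k => (jb k)⁻¹) (y := F)
    (fun k => (inv_nonneg).2 (jb_pos k).le) hF0 Ksummable hFs
  have hA'sum : Summable A' := hA'sum0.congr fun k => (hAinv k).symm
  have hF'sum : Summable F' := hF'sum0.congr fun k => (hFinv k).symm
  set sK := Real.sqrt (∑' k : ℤ, ((jb k)⁻¹) ^ 2) with hsK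
  set bA := Real.sqrt (∑' k, A k ^ 2) with hbA
  set bF := Real.sqrt (∑' k, F k ^ 2) with hbF
  have hA'le : ∑' k, A' k ≤ sK * bA := by
    rw [tsum_congr hAinv]; exact hA'le0
  have hF'le : ∑' k, F' k ≤ sK * bF := by
    rw [tsum_congr hFinv]; exact hF'le0
  have hAb : ∀ k, A k ≤ bA := by
    intro k
    have h1 : A k ^ 2 ≤ ∑' j, A j ^ 2 := Summable.le_tsum hAs k fun j _ => sq_nonneg _
    calc A k = Real.sqrt (A k ^ 2) := (Real.sqrt_sq (hA0 k)).symm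
    _ ≤ bA := Real.sqrt_le_sqrt h1
  have hFb : ∀ k, F k ≤ bF := by
    intro k
    have h1 : F k ^ 2 ≤ ∑' j, F j ^ 2 := Summable.le_tsum hFs k fun j _ => sq_nonneg _
    calc F k = Real.sqrt (F k ^ 2) := (Real.sqrt_sq (hF0 k)).symm
    _ ≤ bF := Real.sqrt_le_sqrt h1
  have hterm1 : ∀ n : ℤ, Summable fun m => A (n - m) * F' m := by
    intro n
    apply Summable.of_nonneg_of_le (fun m => mul_nonneg (hA0 _) (hF'0 _))
      (fun m => mul_le_mul_of_nonneg_right (hAb _) (hF'0 m)) (hF'sum.mul_left bA)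
  have hterm2 : ∀ n : ℤ, Summable fun m => A' (n - m) * F m := by
    intro n
    have hsh : Summable fun m => A' (n - m) := summable_shift hA'sum n
    apply Summable.of_nonneg_of_le (fun m => mul_nonneg (hA'0 _) (hF0 _))
      (fun m => mul_le_mul_of_nonneg_left (hFb m) (hA'0 _)) (hsh.mul_right bF)
  set c1 := fun n : ℤ => ∑' m, F' (n - m) * A m with hc1
  set c2 := fun n : ℤ => ∑' m, A' (n - m) * F m with hc2
  have hc1eq : ∀ n, (∑' m, A (n - m) * F' m) = c1 n := by
    intro n
    have he := (Equiv.subLeft n).tsum_eq (fun m => F' (n - m) * A m)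
    calc (∑' m, A (n - m) * F' m)
        = ∑' m, F' (n - (n - m)) * A (n - m) := by
          refine tsum_congr fun m => ?_
          rw [show n - (n - m) = m by omega, mul_comm]
    _ = c1 n := he
  have hc10 : ∀ n, 0 ≤ c1 n := fun n =>
    tsum_nonneg fun m => mul_nonneg (hF'0 _) (hA0 _)
  have hc20 : ∀ n, 0 ≤ c2 n := fun n =>
    tsum_nonneg fun m => mul_nonneg (hA'0 _) (hF0 _)
  have ha2 : Summable fun k => ‖a k‖ ^ 2 := l2_of_memH hρ0 ha
  have hf2 : Summable fun k => ‖f k‖ ^ 2 := l2_of_memH hρ0 hf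
  have key : ∀ n, wt ρ 1 n * ‖fmul a f n‖ ≤ c1 n + c2 n := by
    intro n
    have hsum1 : Summable fun m => ‖a (n - m)‖ * ‖f m‖ := conv_summand ha2 hf2 n
    have h1 : ‖fmul a f n‖ ≤ ∑' m, ‖a (n - m)‖ * ‖f m‖ := by
      rw [fmul]
      calc ‖∑' m, a (n - m) * f m‖ ≤ ∑' m, ‖a (n - m) * f m‖ :=
            norm_tsum_le_tsum_norm (hsum1.congr fun m => (norm_mul _ _).symm)
      _ = _ := tsum_congr fun m => norm_mul _ _
    have h2 : wt ρ 1 n * ‖fmul a f n‖ ≤ ∑' m, wt ρ 1 n * (‖a (n - m)‖ * ‖f m‖) := by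
      rw [tsum_mul_left]
      exact mul_le_mul_of_nonneg_left h1 (wt_pos ρ n).le
    refine h2.trans ?_
    have h3 : ∀ m, wt ρ 1 n * (‖a (n - m)‖ * ‖f m‖)
        ≤ A (n - m) * F' m + A' (n - m) * F m := by
      intro m
      have hw := wt_subadd hρ0 n m
      have hmul := mul_le_mul_of_nonneg_right hw
        (mul_nonneg (norm_nonneg (a (n - m))) (norm_nonneg (f m)))
      refine hmul.trans_eq ?_
      show _ = wt ρ 1 (n-m) * ‖a (n-m)‖ * (Real.exp (ρ * |(m:ℝ)|) * ‖f m‖)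
        + Real.exp (ρ * |((n-m:ℤ):ℝ)|) * ‖a (n-m)‖ * (wt ρ 1 m * ‖f m‖)
      ring
    have h4 : (∑' m, wt ρ 1 n * (‖a (n - m)‖ * ‖f m‖))
        ≤ ∑' m, (A (n - m) * F' m + A' (n - m) * F m) :=
      Summable.tsum_le_tsum h3 (hsum1.mul_left _) ((hterm1 n).add (hterm2 n))
    refine h4.trans_eq ?_
    rw [Summable.tsum_add (hterm1 n) (hterm2 n), hc1eq n]
  obtain ⟨hc1s, hc1b⟩ := young hF'0 hA0 hF'sum hAs
  obtain ⟨hc2s, hc2b⟩ := young hA'0 hF0 hA'sum hFs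
  obtain ⟨hsumsq, htri⟩ := tsum_sqrt_triangle hc10 hc20 hc1s hc2s
  obtain ⟨hPs, hPb⟩ := tsum_sqrt_mono key
    (fun n => mul_nonneg (wt_pos ρ n).le (norm_nonneg _)) hsumsq
  have hsK0 : 0 ≤ sK := Real.sqrt_nonneg _
  have hbA0 : 0 ≤ bA := Real.sqrt_nonneg _
  have hbF0 : 0 ≤ bF := Real.sqrt_nonneg _
  constructor
  · exact hPs.congr fun n => mul_pow _ _ 2
  · rw [anorm_eq', anorm_eq', anorm_eq']
    calc Real.sqrt (∑' n, (wt ρ 1 n * ‖fmul a f n‖)^2)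
        ≤ Real.sqrt (∑' n, (c1 n + c2 n)^2) := hPb
    _ ≤ Real.sqrt (∑' n, c1 n ^2) + Real.sqrt (∑' n, c2 n ^2) := htri
    _ ≤ (∑' k, F' k) * bA + (∑' k, A' k) * bF := add_le_add hc1b hc2b
    _ ≤ (sK * bF) * bA + (sK * bA) * bF := by
        apply add_le_add
        · exact mul_le_mul_of_nonneg_right hF'le hbA0
        · exact mul_le_mul_of_nonneg_right hA'le hbF0
    _ = 2 * sK * bA * bF := by ring
    _ ≤ Cs 1 * bA * bF := by
        rw [Cs_one_eq, ← hsK]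
        nlinarith [mul_nonneg (mul_nonneg hsK0 hbA0) hbF0]

/-! ### resolvent bound -/

lemma toep_bound {ρ : ℝ} (hρ : 0 < ρ) {w m : ℤ → ℂ}
    (hw : MemH ρ 1 w) (hm : MemH ρ 1 m) :
    MemH ρ 1 (Toep w m) ∧
    anorm ρ 1 (Toep w m) ≤ Cs 1 * anorm ρ 1 w * anorm ρ 1 m := by
  obtain ⟨hcH, hcb⟩ := conv_bound hρ hw hm
  obtain ⟨hTH, hTb⟩ := anorm_mono (x := Toep w m) (y := fmul w m)
    (fun n => cplus_norm_le _ n) hcH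
  exact ⟨hTH, hTb.trans hcb⟩

lemma resolvent_bound {ρ κ C : ℝ} (hρ : 0 < ρ) (hC0 : 0 ≤ C) (hκC : C < κ)
    {w h m : ℤ → ℂ} (hw : MemH ρ 1 w) (hwC : Cs 1 * anorm ρ 1 w ≤ C)
    (hm : MemHplus ρ 1 m) (hh : MemH ρ 1 h)
    (heq : ∀ n : ℤ, 2 * (n:ℂ) * m n + Toep w m n + (κ:ℂ) * m n = h n) :
    anorm ρ 1 m ≤ anorm ρ 1 h / (κ - C) := by
  have hκ0 : 0 < κ := lt_of_le_of_lt hC0 hκC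
  obtain ⟨hmH, hm0⟩ := hm
  obtain ⟨hTH, hTb⟩ := toep_bound hρ hw hmH
  -- the auxiliary sequence
  set y := fun n : ℤ => h n - Toep w m n with hy
  have hyH : MemH ρ 1 y ∧ anorm ρ 1 y ≤ anorm ρ 1 h + anorm ρ 1 (Toep w m) :=
    memH_sub hh hTH
  -- pointwise bound
  have hpt : ∀ n : ℤ, ‖m n‖ ≤ ‖((κ⁻¹ : ℝ) : ℂ) * y n‖ := by
    intro n
    rcases le_or_gt n 0 with hn | hn
    · rw [hm0 n hn]
      simpa using norm_nonneg (((κ⁻¹:ℝ):ℂ) * y n)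
    · have heqn : (2 * (n:ℂ) + (κ:ℂ)) * m n = y n := by
        rw [hy]
        have := heq n
        push_cast
        linear_combination this
      have hnorm : ‖(2 * (n:ℂ) + (κ:ℂ))‖ = 2 * (n:ℝ) + κ := by
        rw [show (2 * (n:ℂ) + (κ:ℂ)) = (((2 * (n:ℝ) + κ : ℝ)) : ℂ) by push_cast; ring]
        rw [Complex.norm_real, Real.norm_eq_abs, abs_of_pos]
        have : (1:ℝ) ≤ (n:ℝ) := by exact_mod_cast hn
        linarith
      have h2 : (2 * (n:ℝ) + κ) * ‖m n‖ = ‖y n‖ := by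
        rw [← hnorm, ← norm_mul, heqn]
      rw [norm_mul, Complex.norm_real, Real.norm_eq_abs, abs_of_pos (inv_pos.2 hκ0)]
      have hn1 : (1:ℝ) ≤ (n:ℝ) := by exact_mod_cast hn
      calc ‖m n‖ ≤ κ⁻¹ * ((2 * (n:ℝ) + κ) * ‖m n‖) := by
            rw [inv_mul_eq_div, le_div_iff₀ hκ0]
            nlinarith [norm_nonneg (m n)]
      _ = κ⁻¹ * ‖y n‖ := by rw [h2]
  obtain ⟨hcy, hacy⟩ := anorm_const_mul (ρ := ρ) κ⁻¹ hyH.1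
  obtain ⟨_, hmono⟩ := anorm_mono hpt hcy
  have habs : |κ⁻¹| = κ⁻¹ := abs_of_pos (inv_pos.2 hκ0)
  have hX : anorm ρ 1 m ≤ κ⁻¹ * (anorm ρ 1 h + C * anorm ρ 1 m) := by
    have h1 : anorm ρ 1 m ≤ κ⁻¹ * anorm ρ 1 y := by
      rw [← habs]
      exact hmono.trans_eq hacy
    refine h1.trans ?_
    apply mul_le_mul_of_nonneg_left _ (inv_pos.2 hκ0).le
    refine hyH.2.trans ?_
    have h3 : anorm ρ 1 (Toep w m) ≤ C * anorm ρ 1 m := by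
      refine hTb.trans ?_
      exact mul_le_mul_of_nonneg_right hwC (anorm_nonneg _ _ _)
    linarith
  -- solve for anorm m
  have hfin : (κ - C) * anorm ρ 1 m ≤ anorm ρ 1 h := by
    have h2 : κ * anorm ρ 1 m ≤ anorm ρ 1 h + C * anorm ρ 1 m := by
      have := mul_le_mul_of_nonneg_left hX hκ0.le
      rw [← mul_assoc, mul_inv_cancel₀ hκ0.ne', one_mul] at this
      exact this
    linarith
  rw [le_div_iff₀ (by linarith : (0:ℝ) < κ - C)]
  linarith [hfin, mul_comm (anorm ρ 1 m) (κ - C)]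

/-! ### linearity helpers -/

lemma cplus_sub' {g1 g2 g3 : ℤ → ℂ} (hptw : ∀ n, g1 n = g2 n - g3 n) (n : ℤ) :
    Cplus g1 n = Cplus g2 n - Cplus g3 n := by
  simp only [Cplus]
  split
  · exact hptw n
  · simp

lemma fmul_sub_right {u a b : ℤ → ℂ} (n : ℤ)
    (h1 : Summable fun m => u (n - m) * a m) (h2 : Summable fun m => u (n - m) * b m) :
    fmul u (fun k => a k - b k) n = fmul u a n - fmul u b n := by
  rw [fmul, fmul, fmul, ← Summable.tsum_sub h1 h2]
  exact tsum_congr fun m => mul_sub _ _ _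

lemma fmul_sub_left {a b w : ℤ → ℂ} (n : ℤ)
    (h1 : Summable fun m => a (n - m) * w m) (h2 : Summable fun m => b (n - m) * w m) :
    fmul (fun k => a k - b k) w n = fmul a w n - fmul b w n := by
  rw [fmul, fmul, fmul, ← Summable.tsum_sub h1 h2]
  exact tsum_congr fun m => sub_mul _ _ _


/-- Local Lipschitz continuity of the gauge map: for real
`u, v ∈ H₀^{ρ,1}` with norms `≤ R` and `κ > 100 C₁ R`,
`‖m(κ,u) - m(κ,v)‖_{ρ,1} ≤ (1/(κ-C₁R) + C₁R/(κ-C₁R)²) ‖u-v‖_{ρ,1}`. -/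
theorem gauge_lipschitz (ρ R κ : ℝ) (hρ : 0 < ρ) (hR : 0 < R)
    (u v : ℤ → ℂ)
    (hu : MemH ρ 1 u) (hu0 : u 0 = 0) (hur : IsReal u) (huR : anorm ρ 1 u ≤ R)
    (hv : MemH ρ 1 v) (hv0 : v 0 = 0) (hvr : IsReal v) (hvR : anorm ρ 1 v ≤ R)
    (hκ : 100 * Cs 1 * R < κ)
    (mu mv : ℤ → ℂ)
    (hmu : MemHplus ρ 1 mu) (hmue : ∀ n : ℤ, LaxOp u mu n + (κ : ℂ) * mu n = Cplus u n)
    (hmv : MemHplus ρ 1 mv) (hmve : ∀ n : ℤ, LaxOp v mv n + (κ : ℂ) * mv n = Cplus v n) :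
    anorm ρ 1 (fun n => mu n - mv n) ≤
      ((κ - Cs 1 * R)⁻¹ + Cs 1 * R / (κ - Cs 1 * R) ^ 2) *
        anorm ρ 1 (fun n => u n - v n) := by
  -- MAIN PROOF BODY
  have hρ0 : 0 ≤ ρ := hρ.le
  set C := Cs 1 * R with hC
  have hCpos : 0 < C := mul_pos Cs_one_pos hR
  have hκC : C < κ := by
    have : 100 * Cs 1 * R = 100 * C := by rw [hC]; ring
    nlinarith
  have hpos : (0:ℝ) < κ - C := by linarith
  have hwCu : Cs 1 * anorm ρ 1 u ≤ C :=
    mul_le_mul_of_nonneg_left huR Cs_one_pos.le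
  have hwCv : Cs 1 * anorm ρ 1 v ≤ C :=
    mul_le_mul_of_nonneg_left hvR Cs_one_pos.le
  -- ℓ² summability of everything
  have hu2 : Summable fun k => ‖u k‖ ^ 2 := l2_of_memH hρ0 hu
  have hv2 : Summable fun k => ‖v k‖ ^ 2 := l2_of_memH hρ0 hv
  have hmu2 : Summable fun k => ‖mu k‖ ^ 2 := l2_of_memH hρ0 hmu.1
  have hmv2 : Summable fun k => ‖mv k‖ ^ 2 := l2_of_memH hρ0 hmv.1
  -- bound on mv
  have hCpv := anorm_mono (x := Cplus v) (fun n => cplus_norm_le v n) hv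
  have hmvb : anorm ρ 1 mv ≤ R / (κ - C) := by
    have h1 := resolvent_bound hρ hCpos.le hκC hv hwCv hmv hCpv.1
      (fun n => hmve n)
    refine h1.trans ?_
    gcongr
    exact hCpv.2.trans hvR
  -- the difference and its equation
  have hwplus : MemHplus ρ 1 (fun n => mu n - mv n) :=
    ⟨(memH_sub hmu.1 hmv.1).1, fun n hn => by
      show mu n - mv n = 0
      rw [hmu.2 n hn, hmv.2 n hn, sub_zero]⟩
  have huvH := memH_sub hu hv
  set D := anorm ρ 1 (fun n => u n - v n) with hD
  have hD0 : 0 ≤ D := anorm_nonneg _ _ _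
  have huv2 : Summable fun k => ‖u k - v k‖ ^ 2 := l2_of_memH hρ0 huvH.1
  -- h
  set h := fun n : ℤ => Cplus (fun k => u k - v k) n
      - Toep (fun k => u k - v k) mv n with hhdef
  have hCpuv := anorm_mono (x := Cplus (fun k => u k - v k))
    (fun n => cplus_norm_le _ n) huvH.1
  have hTuv := toep_bound hρ huvH.1 hmv.1
  have hhH := memH_sub hCpuv.1 hTuv.1
  -- derive the equation for the difference
  have heq : ∀ n : ℤ, 2 * (n:ℂ) * (mu n - mv n)
      + Toep u (fun k => mu k - mv k) n + (κ:ℂ) * (mu n - mv n) = h n := by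
    intro n
    have e1 := hmue n
    have e2 := hmve n
    simp only [LaxOp] at e1 e2
    have hf1 : ∀ k : ℤ, fmul u (fun j => mu j - mv j) k = fmul u mu k - fmul u mv k :=
      fun k => fmul_sub_right k (conv_summand' hu2 hmu2 k) (conv_summand' hu2 hmv2 k)
    have hf2 : ∀ k : ℤ, fmul (fun j => u j - v j) mv k = fmul u mv k - fmul v mv k :=
      fun k => fmul_sub_left k (conv_summand' hu2 hmv2 k) (conv_summand' hv2 hmv2 k)
    have hT1 : Toep u (fun j => mu j - mv j) n = Toep u mu n - Toep u mv n := by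
      rw [Toep, Toep, Toep]
      exact cplus_sub' hf1 n
    have hT2 : Toep (fun j => u j - v j) mv n = Toep u mv n - Toep v mv n := by
      rw [Toep, Toep, Toep]
      exact cplus_sub' hf2 n
    have hCp : Cplus (fun k => u k - v k) n = Cplus u n - Cplus v n :=
      cplus_sub' (fun k => rfl) n
    show _ = Cplus (fun k => u k - v k) n - Toep (fun k => u k - v k) mv n
    rw [hT1, hT2, hCp]
    linear_combination e1 - e2
  -- resolvent estimate for the difference
  have hwb := resolvent_bound hρ hCpos.le hκC hu hwCu hwplus hhH.1 heq
  -- estimate anorm h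
  have hhb : anorm ρ 1 h ≤ D + Cs 1 * D * (R / (κ - C)) := by
    refine hhH.2.trans ?_
    have h1 : anorm ρ 1 (Cplus (fun k => u k - v k)) ≤ D := hCpuv.2
    have h2 : anorm ρ 1 (Toep (fun k => u k - v k) mv)
        ≤ Cs 1 * D * (R / (κ - C)) := by
      refine hTuv.2.trans ?_
      have hCsD0 : 0 ≤ Cs 1 * D := mul_nonneg Cs_one_pos.le hD0
      exact mul_le_mul_of_nonneg_left hmvb hCsD0
    linarith
  -- conclude
  have hfin : anorm ρ 1 (fun n => mu n - mv n)
      ≤ (D + Cs 1 * D * (R / (κ - C))) / (κ - C) := by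
    refine hwb.trans ?_
    gcongr
  refine hfin.trans_eq ?_
  have hne : κ - Cs 1 * R ≠ 0 := by rw [← hC]; exact hpos.ne'
  rw [hC]
  field_simp


end BO
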